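/- Let F > 0, A > 0, h_ref > 0, ω > 0, and ζ > 0 be constants. Define the transmission delay as a function of the exploration distance x ≥ 0 by t(x) = F / log₂(1 + A·(h_ref + ω·(1 − e^{−x/ζ}))). Then t is strictly convex on [0, ∞). -/

import Mathlib

/-!
The argument `1 + A·h(x)` of the logarithm is a constant minus a positive multiple of `e^{-x/ζ}`,
hence strictly concave, and it exceeds `1` on `[0, ∞)`. Composing with the concave, strictly
increasing `log₂` keeps it strictly concave and makes it positive; composing that with the convex,
strictly decreasing `u ↦ F / u` on `(0, ∞)` turns it strictly convex.
-/

open Real Set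

section Composition

variable {𝕜 E β γ : Type*} [Semiring 𝕜] [PartialOrder 𝕜] [AddCommMonoid E] [SMul 𝕜 E]
  [AddCommMonoid β] [PartialOrder β] [SMul 𝕜 β]
  [AddCommMonoid γ] [PartialOrder γ] [SMul 𝕜 γ]
  {s : Set E} {t : Set β} {f : E → β} {g : β → γ}

theorem ConcaveOn.comp_strictConcaveOn_of_mapsTo (hg : ConcaveOn 𝕜 t g)
    (hf : StrictConcaveOn 𝕜 s f) (hg' : StrictMonoOn g t) (hst : MapsTo f s t) :
    StrictConcaveOn 𝕜 s (g ∘ f) :=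
  ⟨hf.1, fun _ hx _ hy hxy _ _ ha hb hab =>
    (hg.2 (hst hx) (hst hy) ha.le hb.le hab).trans_lt <|
      hg' (hg.1 (hst hx) (hst hy) ha.le hb.le hab) (hst (hf.1 hx hy ha.le hb.le hab)) <|
        hf.2 hx hy hxy ha hb hab⟩

theorem ConvexOn.comp_strictConcaveOn_of_mapsTo (hg : ConvexOn 𝕜 t g)
    (hf : StrictConcaveOn 𝕜 s f) (hg' : StrictAntiOn g t) (hst : MapsTo f s t) :
    StrictConvexOn 𝕜 s (g ∘ f) :=
  hg.dual.comp_strictConcaveOn_of_mapsTo hf hg' hst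

end Composition

theorem Real.strictConcaveOn_const_sub_mul_exp_mul {c d k : ℝ} (hd : 0 < d) (hk : k ≠ 0) :
    StrictConcaveOn ℝ univ fun x => c - d * exp (k * x) := by
  refine ⟨convex_univ, fun x _ y _ hxy a b ha hb hab => ?_⟩
  have hkxy : k * x ≠ k * y := by simpa [hk] using hxy
  have hexp := strictConvexOn_exp.2 (mem_univ _) (mem_univ _) hkxy ha hb hab
  simp only [smul_eq_mul] at hexp ⊢
  rw [show a * (k * x) + b * (k * y) = k * (a * x + b * y) by ring] at hexp
  calc a * (c - d * exp (k * x)) + b * (c - d * exp (k * y))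
      = c - d * (a * exp (k * x) + b * exp (k * y)) := by linear_combination c * hab
    _ < c - d * exp (k * (a * x + b * y)) := by gcongr

theorem Real.concaveOn_logb {b : ℝ} (hb : 1 ≤ b) : ConcaveOn ℝ (Ioi 0) (logb b) :=
  (strictConcaveOn_log_Ioi.concaveOn.smul (inv_nonneg.2 (log_nonneg hb))).congr
    fun x _ => by simp only [smul_eq_mul, logb, div_eq_inv_mul]

theorem convexOn_const_div {c : ℝ} (hc : 0 ≤ c) : ConvexOn ℝ (Ioi 0) fun x => c / x := by
  simpa only [smul_eq_mul, zpow_neg_one, ← div_eq_mul_inv] using (convexOn_zpow (-1)).smul hc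

theorem strictAntiOn_const_div {c : ℝ} (hc : 0 < c) : StrictAntiOn (fun x => c / x) (Ioi 0) :=
  fun _ hx _ _ hxy => div_lt_div_of_pos_left hc hx hxy

/-- The transmission delay `t(x) = F / log₂(1 + A·(h_ref + ω·(1 − e^{−x/ζ})))`
is strictly convex on `[0, ∞)`. -/
theorem transmission_delay_strictConvexOn
    (F A href ω ζ : ℝ) (hF : 0 < F) (hA : 0 < A) (hh : 0 < href)
    (hω : 0 < ω) (hζ : 0 < ζ) :
    StrictConvexOn ℝ (Set.Ici (0 : ℝ))
      (fun x => F / Real.logb 2 (1 + A * (href + ω * (1 - Real.exp (-x / ζ))))) := by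
  set gain : ℝ → ℝ := fun x => 1 + A * (href + ω * (1 - exp (-x / ζ)))
  have hgain : StrictConcaveOn ℝ (Ici 0) gain :=
    ((strictConcaveOn_const_sub_mul_exp_mul (c := 1 + A * href + A * ω) (mul_pos hA hω)
      (neg_ne_zero.2 (inv_ne_zero hζ.ne'))).subset (subset_univ _) (convex_Ici 0)).congr
      fun x _ => by simp only [gain]; ring_nf
  have hgain_gt_one : MapsTo gain (Ici 0) (Ioi 1) := fun x (hx : 0 ≤ x) => by
    have hdecay : exp (-x / ζ) ≤ 1 :=
      exp_le_one_iff.2 (div_nonpos_of_nonpos_of_nonneg (neg_nonpos.2 hx) hζ.le)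
    exact lt_add_of_pos_right 1 <|
      mul_pos hA (add_pos_of_pos_of_nonneg hh (mul_nonneg hω.le (sub_nonneg.2 hdecay)))
  have hlog : StrictConcaveOn ℝ (Ici 0) (logb 2 ∘ gain) :=
    (concaveOn_logb one_le_two).comp_strictConcaveOn_of_mapsTo hgain
      (strictMonoOn_logb one_lt_two) (hgain_gt_one.mono_right (Ioi_subset_Ioi zero_le_one))
  exact (convexOn_const_div hF.le).comp_strictConcaveOn_of_mapsTo hlog (strictAntiOn_const_div hF)
    fun x hx => logb_pos one_lt_two (hgain_gt_one hx)
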